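/- Let u be a function continuous near a point a ∈ ℂ with φ = u + (β−1) log|ξ − a| satisfying e^{2φ}|dξ|² = β² |η|^{2β−2}(1+|η|^{2β})^{−2} |dη|² for a holomorphic coordinate η centered at a. Then lim_{ξ→a} |ξ − a| ∂u/∂ξ = 0. -/

import Mathlib

/-!
Write `η = (ξ - a) h` with `h = dslope η a` holomorphic and `h a = η'(a) ≠ 0`. Taking logarithms
in the metric identity gives, off `a`,
`u = log β + (β - 1) log |h| + log |η'| - log (1 + |η|^{2β})`,
so the singular term `(β - 1) log |ξ - a|` cancels. The first three terms are smooth at `a`, so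
`(ξ - a)` times their `∂` tends to `0`; the last contributes
`-β |η|^{2β} / (1 + |η|^{2β}) · η' / h`, which tends to `0` because `|η|^{2β} → 0`.
-/

open Filter Topology

/-- The Wirtinger derivative `∂f/∂ξ = (1/2)(∂f/∂x - i ∂f/∂y)`. -/
noncomputable def wirtingerD (f : ℂ → ℂ) (z : ℂ) : ℂ :=
  (1 / 2 : ℂ) * (fderiv ℝ f z 1 - Complex.I * fderiv ℝ f z Complex.I)

/-- A real-valued `f` with derivative `reMulCLM w` at `z` has `∂f/∂ξ (z) = w / 2`. -/
noncomputable def reMulCLM (w : ℂ) : ℂ →L[ℝ] ℝ :=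
  Complex.reCLM.comp ((ContinuousLinearMap.mul ℂ ℂ w).restrictScalars ℝ)

@[simp]
lemma reMulCLM_apply (w v : ℂ) : reMulCLM w v = (w * v).re := rfl

lemma reMulCLM_ofReal_mul (c : ℝ) (w : ℂ) : reMulCLM (c * w) = c • reMulCLM w := by
  ext v; simp [mul_assoc]

lemma wirtingerD_ofReal_of_hasFDerivAt {f : ℂ → ℝ} {w z : ℂ}
    (hf : HasFDerivAt f (reMulCLM w) z) : wirtingerD (fun x => (f x : ℂ)) z = w / 2 := by
  have hc : HasFDerivAt (fun x => (f x : ℂ)) (Complex.ofRealCLM.comp (reMulCLM w)) z :=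
    Complex.ofRealCLM.hasFDerivAt.comp z hf
  rw [wirtingerD, hc.fderiv]
  simp only [ContinuousLinearMap.comp_apply, Complex.ofRealCLM_apply, reMulCLM_apply, mul_one,
    Complex.mul_I_re, Complex.ofReal_neg]
  conv_rhs => rw [← Complex.re_add_im w]
  ring

lemma HasDerivAt.comp_hasFDerivAt_reMulCLM {φ : ℝ → ℝ} {φ' : ℝ} {f : ℂ → ℝ} {w z : ℂ}
    (hφ : HasDerivAt φ φ' (f z)) (hf : HasFDerivAt f (reMulCLM w) z) :
    HasFDerivAt (fun x => φ (f x)) (reMulCLM (φ' * w)) z := by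
  rw [reMulCLM_ofReal_mul]; exact hφ.comp_hasFDerivAt z hf

lemma HasDerivAt.hasFDerivAt_log_norm {g : ℂ → ℂ} {g' z : ℂ} (hg : HasDerivAt g g' z)
    (hz : g z ≠ 0) : HasFDerivAt (fun x => Real.log ‖g x‖) (reMulCLM (g' / g z)) z := by
  have hsq := (hg.hasFDerivAt.restrictScalars ℝ).norm_sq.log (by positivity)
  have hfun : (fun x => Real.log ‖g x‖) = fun x => 2⁻¹ * Real.log (‖g x‖ ^ 2) := by
    funext x; rw [Real.log_pow]; ring
  rw [hfun]
  refine (hsq.const_mul 2⁻¹).congr_fderiv ?_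
  ext v
  simp only [smul_apply, ContinuousLinearMap.comp_apply,
    ContinuousLinearMap.coe_restrictScalars', ContinuousLinearMap.toSpanSingleton_apply,
    smul_eq_mul, coe_innerSL_apply, Complex.inner, Complex.mul_re, Complex.mul_im,
    Complex.conj_re, Complex.conj_im, nsmul_eq_mul, reMulCLM_apply, Complex.div_re,
    Complex.div_im, Complex.normSq_eq_norm_sq]
  field_simp
  ring

lemma HasDerivAt.hasFDerivAt_log_one_add_norm_rpow {g : ℂ → ℂ} {g' z : ℂ} (p : ℝ)
    (hg : HasDerivAt g g' z) (hz : g z ≠ 0) :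
    HasFDerivAt (fun x => Real.log (1 + ‖g x‖ ^ p))
      (reMulCLM ((p * ‖g z‖ ^ p / (1 + ‖g z‖ ^ p) : ℝ) * (g' / g z))) z := by
  have hφ : HasDerivAt (fun t => Real.log (1 + Real.exp (t * p)))
      (p * ‖g z‖ ^ p / (1 + ‖g z‖ ^ p)) (Real.log ‖g z‖) := by
    have := (((hasDerivAt_id (Real.log ‖g z‖)).mul_const p).exp.const_add 1).log (by positivity)
    refine this.congr_deriv ?_
    rw [Real.rpow_def_of_pos (norm_pos_iff.2 hz)]
    simp only [id_eq, one_mul]; ring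
  have hne : ∀ᶠ x in 𝓝 z, g x ≠ 0 := hg.continuousAt.eventually_ne hz
  refine (hφ.comp_hasFDerivAt_reMulCLM (hg.hasFDerivAt_log_norm hz)).congr_of_eventuallyEq ?_
  filter_upwards [hne] with x hx
  rw [Real.rpow_def_of_pos (norm_pos_iff.2 hx)]

lemma AnalyticAt.dslope {f : ℂ → ℂ} {a : ℂ} (hf : AnalyticAt ℂ f a) :
    AnalyticAt ℂ (dslope f a) a := by
  obtain ⟨p, hp⟩ := hf
  exact ⟨_, hp.has_fpower_series_dslope_fslope⟩

lemma eq_log_of_exp_eq_coneDensity {β u x y t : ℝ} (hβ : 0 < β) (hx : 0 < x) (hy : 0 < y)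
    (ht : 0 < t)
    (h : Real.exp (2 * (u + (β - 1) * Real.log x)) =
      β ^ 2 * (x * y) ^ (2 * β - 2) / (1 + (x * y) ^ (2 * β)) ^ 2 * t ^ 2) :
    u = Real.log β + (β - 1) * Real.log y + Real.log t - Real.log (1 + (x * y) ^ (2 * β)) := by
  have hlog := congrArg Real.log h
  rw [Real.log_exp, Real.log_mul (by positivity) (by positivity),
    Real.log_div (by positivity) (by positivity), Real.log_mul (by positivity) (by positivity),
    Real.log_pow, Real.log_pow, Real.log_pow, Real.log_rpow (by positivity),
    Real.log_mul hx.ne' hy.ne'] at hlog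
  push_cast at hlog
  linarith

section ConeMetric

variable {β : ℝ} {a : ℂ} {η : ℂ → ℂ}

noncomputable def coneRegularPart (β : ℝ) (a : ℂ) (η : ℂ → ℂ) (ξ : ℂ) : ℝ :=
  Real.log β + (β - 1) * Real.log ‖dslope η a ξ‖ + Real.log ‖deriv η ξ‖
    - Real.log (1 + ‖η ξ‖ ^ (2 * β))

noncomputable def coneLogDeriv (β : ℝ) (a : ℂ) (η : ℂ → ℂ) (ξ : ℂ) : ℂ :=
  (β - 1 : ℝ) * (deriv (dslope η a) ξ / dslope η a ξ) + deriv (deriv η) ξ / deriv η ξ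
    - (2 * β * ‖η ξ‖ ^ (2 * β) / (1 + ‖η ξ‖ ^ (2 * β)) : ℝ) * (deriv η ξ / η ξ)

lemma hasFDerivAt_coneRegularPart {ξ : ℂ} (hη : DifferentiableAt ℂ η ξ)
    (hη' : DifferentiableAt ℂ (deriv η) ξ) (hh : DifferentiableAt ℂ (dslope η a) ξ)
    (hη0 : η ξ ≠ 0) (hη'0 : deriv η ξ ≠ 0) (hh0 : dslope η a ξ ≠ 0) :
    HasFDerivAt (coneRegularPart β a η) (reMulCLM (coneLogDeriv β a η ξ)) ξ := by
  refine (((((hh.hasDerivAt.hasFDerivAt_log_norm hh0).const_mul (β - 1)).const_add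
    (Real.log β)).add (hη'.hasDerivAt.hasFDerivAt_log_norm hη'0)).sub
    (hη.hasDerivAt.hasFDerivAt_log_one_add_norm_rpow (2 * β) hη0)).congr_fderiv ?_
  ext v
  simp [coneLogDeriv, add_mul, sub_mul, mul_assoc]

lemma eq_sub_mul_dslope (hη₀ : η a = 0) (ξ : ℂ) : η ξ = (ξ - a) * dslope η a ξ := by
  simpa [hη₀] using (sub_smul_dslope η a ξ).symm

lemma eventually_ne_zero_of_simple_zero (hη : AnalyticAt ℂ η a) (hη₀ : η a = 0)
    (hη' : deriv η a ≠ 0) :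
    ∀ᶠ ξ in 𝓝[≠] a, η ξ ≠ 0 ∧ deriv η ξ ≠ 0 ∧ dslope η a ξ ≠ 0 := by
  have hh : ∀ᶠ ξ in 𝓝 a, dslope η a ξ ≠ 0 :=
    hη.dslope.continuousAt.eventually_ne (by rwa [dslope_same])
  have hd : ∀ᶠ ξ in 𝓝 a, deriv η ξ ≠ 0 := hη.deriv.continuousAt.eventually_ne hη'
  filter_upwards [nhdsWithin_le_nhds (hh.and hd), self_mem_nhdsWithin] with ξ ⟨hhξ, hdξ⟩ hξa
  exact ⟨eq_sub_mul_dslope hη₀ ξ ▸ mul_ne_zero (sub_ne_zero.2 hξa) hhξ, hdξ, hhξ⟩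

lemma tendsto_sub_mul_coneLogDeriv (hβ : 0 < β) (hη : AnalyticAt ℂ η a) (hη₀ : η a = 0)
    (hη' : deriv η a ≠ 0) :
    Tendsto (fun ξ => (ξ - a) * coneLogDeriv β a η ξ) (𝓝[≠] a) (𝓝 0) := by
  set s : ℂ → ℝ := fun ξ => 2 * β * ‖η ξ‖ ^ (2 * β) / (1 + ‖η ξ‖ ^ (2 * β))
  set G : ℂ → ℂ := fun ξ => (ξ - a) * ((β - 1 : ℝ) * (deriv (dslope η a) ξ / dslope η a ξ)
    + deriv (deriv η) ξ / deriv η ξ) - (s ξ : ℂ) * (deriv η ξ / dslope η a ξ)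
  have hh0 : dslope η a a ≠ 0 := by rwa [dslope_same]
  have hs : ContinuousAt s a := by
    have : ContinuousAt (fun ξ => ‖η ξ‖ ^ (2 * β)) a :=
      hη.continuousAt.norm.rpow_const (Or.inr (by positivity))
    exact (continuousAt_const.mul this).div (continuousAt_const.add this) (by positivity)
  have hG : ContinuousAt G a := by
    have := hη.dslope.continuousAt
    have := hη.dslope.deriv.continuousAt
    have := hη.deriv.continuousAt
    have := hη.deriv.deriv.continuousAt
    fun_prop (disch := assumption)
  have hGa : G a = 0 := by
    simp [G, s, hη₀, Real.zero_rpow (by positivity : 2 * β ≠ 0)]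
  have hEq : ∀ᶠ ξ in 𝓝[≠] a, G ξ = (ξ - a) * coneLogDeriv β a η ξ := by
    filter_upwards [eventually_ne_zero_of_simple_zero hη hη₀ hη', self_mem_nhdsWithin]
      with ξ ⟨hηξ, hdξ, hhξ⟩ hξa
    have hq : (ξ - a) * (deriv η ξ / η ξ) = deriv η ξ / dslope η a ξ := by
      rw [eq_sub_mul_dslope hη₀ ξ]
      field_simp [sub_ne_zero.2 hξa]
    simp only [G, s, coneLogDeriv]
    linear_combination (s ξ : ℂ) * hq
  rw [← hGa]
  exact (hG.tendsto.mono_left nhdsWithin_le_nhds).congr' hEq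

lemma eventually_eq_coneRegularPart {u : ℂ → ℝ} (hβ : 0 < β) (hη₀ : η a = 0)
    (hne : ∀ᶠ ξ in 𝓝[≠] a, η ξ ≠ 0 ∧ deriv η ξ ≠ 0 ∧ dslope η a ξ ≠ 0)
    (hmetric : ∀ᶠ ξ in 𝓝[≠] a,
      Real.exp (2 * (u ξ + (β - 1) * Real.log ‖ξ - a‖)) =
        β ^ 2 * ‖η ξ‖ ^ (2 * β - 2) / (1 + ‖η ξ‖ ^ (2 * β)) ^ 2 * ‖deriv η ξ‖ ^ 2) :
    ∀ᶠ ξ in 𝓝[≠] a, u ξ = coneRegularPart β a η ξ := by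
  filter_upwards [hmetric, hne, self_mem_nhdsWithin] with ξ hξ ⟨_, hdξ, hhξ⟩ hξa
  unfold coneRegularPart
  rw [eq_sub_mul_dslope hη₀ ξ, norm_mul] at hξ ⊢
  exact eq_log_of_exp_eq_coneDensity hβ (norm_pos_iff.2 (sub_ne_zero.2 hξa))
    (norm_pos_iff.2 hhξ) (norm_pos_iff.2 hdξ) hξ

end ConeMetric

theorem stmt10_general (β : ℝ) (hβ : 0 < β ∧ β < 1) (a : ℂ) (u : ℂ → ℝ) (η : ℂ → ℂ)
    (hη_diff : ∀ᶠ ξ in 𝓝 a, DifferentiableAt ℂ η ξ)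
    (hη₀ : η a = 0) (hη' : deriv η a ≠ 0)
    (hmetric : ∀ᶠ ξ in 𝓝[≠] a,
      Real.exp (2 * (u ξ + (β - 1) * Real.log ‖ξ - a‖)) =
        β ^ 2 * ‖η ξ‖ ^ (2 * β - 2) / (1 + ‖η ξ‖ ^ (2 * β)) ^ 2 *
          ‖deriv η ξ‖ ^ 2) :
    Tendsto (fun ξ => (ξ - a) * wirtingerD (fun x => (u x : ℂ)) ξ)
      (𝓝[≠] a) (𝓝 0) := by
  have hη : AnalyticAt ℂ η a := Complex.analyticAt_iff_eventually_differentiableAt.2 hη_diff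
  have hne := eventually_ne_zero_of_simple_zero hη hη₀ hη'
  have hu : ∀ᶠ ξ in 𝓝[≠] a, u =ᶠ[𝓝 ξ] coneRegularPart β a η := by
    filter_upwards [eventually_eventually_nhdsWithin.2
      (eventually_eq_coneRegularPart hβ.1 hη₀ hne hmetric), self_mem_nhdsWithin] with ξ hξ hξa
    rwa [isOpen_compl_singleton.nhdsWithin_eq hξa] at hξ
  have hwirt : ∀ᶠ ξ in 𝓝[≠] a, (ξ - a) * coneLogDeriv β a η ξ / 2 =
      (ξ - a) * wirtingerD (fun x => (u x : ℂ)) ξ := by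
    filter_upwards [hu, hne, nhdsWithin_le_nhds hη.eventually_analyticAt,
      nhdsWithin_le_nhds hη.dslope.eventually_analyticAt] with ξ huξ ⟨hηξ, hdξ, hhξ⟩ hηan hhan
    rw [wirtingerD_ofReal_of_hasFDerivAt ((hasFDerivAt_coneRegularPart hηan.differentiableAt
      hηan.deriv.differentiableAt hhan.differentiableAt hηξ hdξ hhξ).congr_of_eventuallyEq huξ),
      mul_div_assoc]
  simpa using ((tendsto_sub_mul_coneLogDeriv hβ.1 hη hη₀ hη').div_const 2).congr' hwirt

/-- if `u` is continuous near `a`,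
`φ = u + (β-1) log|ξ - a|` and `e^{2φ}|dξ|²` is the model spherical cone
metric `β²|η|^{2β-2}(1+|η|^{2β})^{-2}|dη|²` in a holomorphic coordinate `η`
centered at `a`, then `lim_{ξ→a} (ξ - a) ∂u/∂ξ = 0`. -/
theorem stmt10 (β : ℝ) (hβ : 0 < β ∧ β < 1) (a : ℂ) (u : ℂ → ℝ) (η : ℂ → ℂ)
    (hu_cont : ∀ᶠ ξ in 𝓝 a, ContinuousAt u ξ)
    (hu_diff : ∀ᶠ ξ in 𝓝[≠] a, DifferentiableAt ℝ u ξ)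
    (hη_diff : ∀ᶠ ξ in 𝓝 a, DifferentiableAt ℂ η ξ)
    (hη₀ : η a = 0) (hη' : deriv η a ≠ 0)
    (hmetric : ∀ᶠ ξ in 𝓝[≠] a,
      Real.exp (2 * (u ξ + (β - 1) * Real.log ‖ξ - a‖)) =
        β ^ 2 * ‖η ξ‖ ^ (2 * β - 2) / (1 + ‖η ξ‖ ^ (2 * β)) ^ 2 *
          ‖deriv η ξ‖ ^ 2) :
    Tendsto (fun ξ => (ξ - a) * wirtingerD (fun x => (u x : ℂ)) ξ)
      (𝓝[≠] a) (𝓝 0) :=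
  stmt10_general β hβ a u η hη_diff hη₀ hη' hmetric
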